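/- Let A be a real m×n matrix. Then rank(A^ν) = min(m, Σ_{i=1}^n ν_i) for every ν ∈ {0,1}^n if and only if rank(A) = min(m, n) and spark(A) = rank(A) + 1. -/

import Mathlib

noncomputable section

/-- `rank(A^ν)`, the rank of the submatrix of `A` formed by the columns `i` with `ν i = true`. -/
def subRank {m n : ℕ} (A : Matrix (Fin m) (Fin n) ℝ) (ν : Fin n → Bool) : ℕ :=
  (A.submatrix id (Subtype.val : {i : Fin n // ν i = true} → Fin n)).rank

/-- `spark(A)`: the smallest number of columns of `A` forming a linearly dependent set,
with the convention `spark(A) = n + 1` when all `n` columns are linearly independent. -/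
def spark {m n : ℕ} (A : Matrix (Fin m) (Fin n) ℝ) : ℕ :=
  sInf ({k | ∃ s : Finset (Fin n), s.card = k ∧
      ¬ LinearIndependent ℝ (fun j : s => A.transpose (j : Fin n))} ∪ {n + 1})

/-! Both sides say that any `min m n` columns of `A` are linearly independent, i.e. that the
columns are in general position in `ℝᵐ`. For the rank condition this is because a set of more
than `m` columns contains `m` independent ones, hence spans `ℝᵐ`; for the spark condition it is
the definition of the spark, together with the fact that `m + 1` columns in `ℝᵐ` are always
dependent. -/

open Module Matrix

section GeneralPosition

variable {K V ι : Type*} [DivisionRing K] [AddCommGroup V] [Module K V]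

theorem linearIndependent_restrict_iff_finrank_image_eq_card (v : ι → V) (s : Finset ι) :
    LinearIndependent K (fun i : s => v i) ↔ (v '' s).finrank K = s.card := by
  rw [linearIndependent_iff_card_eq_finrank_span, Fintype.card_coe, Set.image_eq_range, eq_comm]
  rfl

theorem forall_finrank_image_eq_min_iff [FiniteDimensional K V] (v : ι → V) :
    (∀ s : Finset ι, (v '' s).finrank K = min (finrank K V) s.card) ↔
      ∀ s : Finset ι, s.card ≤ finrank K V → LinearIndependent K (fun i : s => v i) := by
  simp only [linearIndependent_restrict_iff_finrank_image_eq_card]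
  refine ⟨fun h s hs => (h s).trans (min_eq_right hs), fun h s => ?_⟩
  rcases le_total s.card (finrank K V) with hs | hs
  · rw [min_eq_right hs, h s hs]
  · obtain ⟨t, hts, htcard⟩ := Finset.exists_subset_card_eq hs
    have hmono : (v '' t).finrank K ≤ (v '' s).finrank K :=
      Set.finrank_mono (Set.image_mono hts)
    rw [h t htcard.le, htcard] at hmono
    exact (min_eq_left hs).symm ▸ le_antisymm (Submodule.finrank_le _) hmono

end GeneralPosition

section Matrix

variable {m n : ℕ} (A : Matrix (Fin m) (Fin n) ℝ)

theorem subRank_eq_finrank_image (ν : Fin n → Bool) :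
    subRank A ν = (A.col '' {i | ν i = true}).finrank ℝ := by
  rw [subRank, rank_eq_finrank_span_cols, Set.image_eq_range]
  rfl

theorem forall_subRank_eq_min_iff :
    (∀ ν : Fin n → Bool, subRank A ν = min m (Finset.univ.filter fun i => ν i = true).card) ↔
      ∀ s : Finset (Fin n), (A.col '' s).finrank ℝ = min m s.card := by
  simp only [subRank_eq_finrank_image]
  exact ⟨fun h s => by simpa using h (· ∈ s), fun h ν => by simpa using h (.filter (ν · = true) .univ)⟩

theorem spark_le_card_of_not_linearIndependent {s : Finset (Fin n)}
    (h : ¬ LinearIndependent ℝ (fun j : s => A.col j)) : spark A ≤ s.card :=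
  Nat.sInf_le (Or.inl ⟨s, rfl, h⟩)

theorem lt_spark_iff {k : ℕ} (hk : k ≤ n) :
    k < spark A ↔ ∀ s : Finset (Fin n), s.card ≤ k → LinearIndependent ℝ (fun j : s => A.col j) := by
  refine ⟨fun h s hs => ?_, fun h => ?_⟩
  · by_contra hdep
    have := spark_le_card_of_not_linearIndependent A hdep
    omega
  · refine le_csInf ⟨n + 1, Or.inr rfl⟩ ?_
    rintro _ (⟨s, rfl, hdep⟩ | rfl)
    · by_contra! hs
      exact hdep (h s (by omega))
    · omega

theorem spark_le_min_add_one : spark A ≤ min m n + 1 := by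
  rcases le_or_gt n m with hnm | hmn
  · rw [min_eq_right hnm]
    exact Nat.sInf_le (Or.inr rfl)
  · rw [min_eq_left hmn.le]
    obtain ⟨s, -, hscard⟩ := Finset.exists_subset_card_eq
      (show m + 1 ≤ (Finset.univ : Finset (Fin n)).card by simpa using hmn)
    refine hscard ▸ spark_le_card_of_not_linearIndependent A fun hli => ?_
    have := hli.fintype_card_le_finrank
    rw [Fintype.card_coe, finrank_fin_fun] at this
    omega

end Matrix

/-- `rank(A^ν) = min(m, Σᵢ νᵢ)` for every `ν ∈ {0,1}^n` if and only if
`rank(A) = min(m, n)` and `spark(A) = rank(A) + 1`. -/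
theorem subRank_eq_min_iff_spark {m n : ℕ} (A : Matrix (Fin m) (Fin n) ℝ) :
    (∀ ν : Fin n → Bool,
        subRank A ν = min m (Finset.univ.filter (fun i => ν i = true)).card)
      ↔ (A.rank = min m n ∧ spark A = A.rank + 1) := by
  have hgp := forall_finrank_image_eq_min_iff (K := ℝ) A.col
  rw [finrank_fin_fun] at hgp
  have hcard (s : Finset (Fin n)) : s.card ≤ min m n ↔ s.card ≤ m := by
    simpa using fun _ : s.card ≤ m => card_finset_fin_le s
  rw [forall_subRank_eq_min_iff, hgp]
  constructor
  · intro hindep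
    have hrank : A.rank = min m n := by
      have huniv := hgp.2 hindep Finset.univ
      rw [Finset.card_univ, Fintype.card_fin] at huniv
      rw [rank_eq_finrank_span_cols, ← Set.image_univ, ← Finset.coe_univ]
      exact huniv
    refine ⟨hrank, hrank ▸ le_antisymm (spark_le_min_add_one A) ?_⟩
    exact (lt_spark_iff A (min_le_right m n)).2 fun s hs => hindep s ((hcard s).1 hs)
  · rintro ⟨hrank, hspark⟩ s hs
    exact (lt_spark_iff A (min_le_right m n)).1 (by omega) s ((hcard s).2 hs)

end
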